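/- arXiv:2106.14600 — 6 statements merged into one kernel-verified Lean document; each statement's English description precedes it below -/
import Mathlib

section
/- If φ : A → B and ψ : C → D are bijections between cofinite subsets of ℕ, then the induced maps φ* and ψ* on ℕ* are equal if and only if the set {n ∈ A ∩ C : φ(n) = ψ(n)} is cofinite in ℕ. -/
/-!
Two maps that agree off a finite set agree on a member of every free ultrafilter. Conversely,
if `f` and `g` disagree on an infinite set `S` on which both are injective, each point of `S`
clashes (`f x = g y` or `g x = f y`) with at most two others, so a greedy choice yields an
infinite `T ⊆ S` with `f '' T` and `g '' T` disjoint; any free ultrafilter containing `T` is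
then sent by `f` and `g` to ultrafilters containing disjoint sets.
-/

open Filter Set

/-- A free ultrafilter on ℕ: one containing every cofinite set. -/
def IsFreeUF (u : Ultrafilter ℕ) : Prop := (u : Filter ℕ) ≤ Filter.cofinite

theorem Set.Finite.inter_preimage_of_injOn {α β : Type*} {f : α → β} {s : Set α} {t : Set β}
    (ht : t.Finite) (hf : InjOn f s) : (s ∩ f ⁻¹' t).Finite :=
  (ht.subset (image_inter_preimage f s t ▸ inter_subset_right)).of_finite_image
    (hf.mono inter_subset_left)

theorem Set.Infinite.exists_subset_disjoint_image_image {α β : Type*} {f g : α → β} {S : Set α}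
    (hS : S.Infinite) (hf : InjOn f S) (hg : InjOn g S) (hfg : ∀ x ∈ S, f x ≠ g x) :
    ∃ T ⊆ S, T.Infinite ∧ Disjoint (f '' T) (g '' T) := by
  have hext : ∀ F : Finset α, (∀ x ∈ F, x ∈ S) →
      ∃ y, y ∈ S ∧ ∀ x ∈ F, x ≠ y ∧ f x ≠ g y ∧ g x ≠ f y := by
    intro F _
    have hclash : (↑F ∪ (S ∩ g ⁻¹' (f '' F)) ∪ (S ∩ f ⁻¹' (g '' F))).Finite :=
      (F.finite_toSet.union ((F.finite_toSet.image f).inter_preimage_of_injOn hg)).union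
        ((F.finite_toSet.image g).inter_preimage_of_injOn hf)
    obtain ⟨y, hyS, hy⟩ := (hS.sdiff hclash).nonempty
    refine ⟨y, hyS, fun x hx => ⟨?_, ?_, ?_⟩⟩
    · rintro rfl; exact hy (Or.inl (Or.inl hx))
    · intro h; exact hy (Or.inl (Or.inr ⟨hyS, x, hx, h⟩))
    · intro h; exact hy (Or.inr ⟨hyS, x, hx, h⟩)
  obtain ⟨s, hsS, hs⟩ := exists_seq_of_forall_finset_exists (· ∈ S) _ hext
  have hs_inj : Function.Injective s := fun m n h => by
    by_contra hmn
    rcases Ne.lt_or_gt hmn with hlt | hlt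
    exacts [(hs _ _ hlt).1 h, (hs _ _ hlt).1 h.symm]
  refine ⟨range s, range_subset_iff.2 hsS, infinite_range_of_injective hs_inj, ?_⟩
  rw [Set.disjoint_left]
  rintro _ ⟨_, ⟨m, rfl⟩, rfl⟩ ⟨_, ⟨n, rfl⟩, h⟩
  rcases lt_trichotomy m n with hlt | rfl | hlt
  exacts [(hs _ _ hlt).2.1 h.symm, hfg _ (hsS m) h.symm, (hs _ _ hlt).2.2 h]

theorem Set.Infinite.exists_ultrafilter_le_cofinite_mem {α : Type*} {T : Set α} (hT : T.Infinite) :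
    ∃ u : Ultrafilter α, (u : Filter α) ≤ cofinite ∧ T ∈ u := by
  have := hT.cofinite_inf_principal_neBot
  obtain ⟨u, hu⟩ := Ultrafilter.exists_le (cofinite ⊓ 𝓟 T)
  exact ⟨u, hu.trans inf_le_left, hu (mem_inf_of_right (mem_principal_self T))⟩

theorem Ultrafilter.map_ne_map_of_disjoint_image_image {α β : Type*} {f g : α → β}
    {u : Ultrafilter α} {T : Set α} (hT : T ∈ u) (hdisj : Disjoint (f '' T) (g '' T)) :
    u.map f ≠ u.map g := by
  intro heq
  have hfT : f '' T ∈ u.map f := image_mem_map hT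
  have hgT : g '' T ∈ u.map f := heq ▸ image_mem_map hT
  exact (u.map f).empty_notMem (hdisj.inter_eq ▸ inter_mem hfT hgT)

theorem Ultrafilter.map_eq_map_of_eventuallyEq {α β : Type*} {f g : α → β} {u : Ultrafilter α}
    (h : f =ᶠ[u] g) : u.map f = u.map g :=
  Ultrafilter.coe_injective (map_congr h)

theorem partial_induced_eq_iff_cofinite_agree_general
    (f g : ℕ → ℕ) (A B C D : Set ℕ)
    (hA : Aᶜ.Finite) (hC : Cᶜ.Finite)
    (hf : Set.BijOn f A B) (hg : Set.BijOn g C D) :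
    (∀ u : Ultrafilter ℕ, IsFreeUF u → Ultrafilter.map f u = Ultrafilter.map g u) ↔
    ({n : ℕ | n ∈ A ∩ C ∧ f n = g n}ᶜ).Finite := by
  refine ⟨fun h => ?_, fun hagree u hu => ?_⟩
  · by_contra hinf
    have hS : (A ∩ C ∩ {n | f n ≠ g n}).Infinite := fun hS =>
      hinf <| ((hA.union hC).union hS).subset fun n hn => by
        simp only [mem_compl_iff, mem_ofPred_eq, mem_inter_iff, mem_union] at hn ⊢
        tauto
    obtain ⟨T, -, hT, hdisj⟩ := hS.exists_subset_disjoint_image_image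
      (hf.injOn.mono fun n hn => hn.1.1) (hg.injOn.mono fun n hn => hn.1.2) fun n hn => hn.2
    obtain ⟨u, hu, hTu⟩ := hT.exists_ultrafilter_le_cofinite_mem
    exact Ultrafilter.map_ne_map_of_disjoint_image_image hTu hdisj (h u hu)
  · exact Ultrafilter.map_eq_map_of_eventuallyEq <|
      mem_of_superset (hu (mem_cofinite.2 hagree)) fun n hn => hn.2

/-- If φ : A → B and ψ : C → D are bijections between cofinite subsets
of ℕ (represented by total functions f, g restricting to bijections A → B, C → D),
then the induced maps on free ultrafilters are equal iff
{n ∈ A ∩ C : f n = g n} is cofinite in ℕ. -/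
theorem partial_induced_eq_iff_cofinite_agree
    (f g : ℕ → ℕ) (A B C D : Set ℕ)
    (hA : Aᶜ.Finite) (hB : Bᶜ.Finite) (hC : Cᶜ.Finite) (hD : Dᶜ.Finite)
    (hf : Set.BijOn f A B) (hg : Set.BijOn g C D) :
    (∀ u : Ultrafilter ℕ, IsFreeUF u → Ultrafilter.map f u = Ultrafilter.map g u) ↔
    ({n : ℕ | n ∈ A ∩ C ∧ f n = g n}ᶜ).Finite :=
  partial_induced_eq_iff_cofinite_agree_general f g A B C D hA hC hf hg
end

section
/- For a bijection φ between cofinite subsets of ℕ, define h(φ) = |ℕ \ ran φ| − |ℕ \ dom φ| ∈ ℤ. If φ and ψ are two such bijections with φ* = ψ* (equivalently, {n ∈ dom φ ∩ dom ψ : φ(n) = ψ(n)} is cofinite), then h(φ) = h(ψ). -/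
open Set Filter

namespace SimpleGraph

noncomputable def greedyColor (G : SimpleGraph ℕ) : ℕ → ℕ
  | n => sInf {c | ∀ m (_ : m < n), G.Adj n m → greedyColor G m ≠ c}

variable (G : SimpleGraph ℕ)

theorem greedyColor_eq (n : ℕ) :
    G.greedyColor n = sInf (G.greedyColor '' {m | m < n ∧ G.Adj n m})ᶜ := by
  rw [greedyColor]
  congr 1
  ext c
  simp

theorem finite_setOf_lt_adj (n : ℕ) : {m | m < n ∧ G.Adj n m}.Finite :=
  (finite_Iio n).subset fun _ hm => hm.1

theorem greedyColor_ne {m n : ℕ} (hmn : m < n) (hadj : G.Adj n m) :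
    G.greedyColor m ≠ G.greedyColor n := by
  have hmem :=
    Nat.sInf_mem ((G.finite_setOf_lt_adj n).image G.greedyColor).infinite_compl.nonempty
  rw [← greedyColor_eq] at hmem
  exact fun h => hmem ⟨m, ⟨hmn, hadj⟩, h⟩

theorem greedyColor_lt {k n : ℕ} (h : {m | m < n ∧ G.Adj n m}.ncard < k) :
    G.greedyColor n < k := by
  have hcard : (G.greedyColor '' {m | m < n ∧ G.Adj n m}).ncard < (Iio k).ncard :=
    (ncard_image_le (G.finite_setOf_lt_adj n)).trans_lt (by simpa using h)
  obtain ⟨c, hck, hc⟩ :=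
    exists_mem_notMem_of_ncard_lt_ncard hcard ((G.finite_setOf_lt_adj n).image _)
  rw [greedyColor_eq]
  exact (Nat.sInf_le hc).trans_lt hck

theorem colorable_of_ncard_lt {k : ℕ} (h : ∀ n, {m | m < n ∧ G.Adj n m}.ncard < k) :
    G.Colorable k := by
  refine ⟨Coloring.mk (fun n => ⟨G.greedyColor n, G.greedyColor_lt (h n)⟩) fun hvw => ?_⟩
  rw [ne_eq, Fin.mk.injEq]
  rcases lt_or_gt_of_ne hvw.ne with hlt | hlt
  · exact G.greedyColor_ne hlt hvw.symm
  · exact (G.greedyColor_ne hlt hvw).symm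

end SimpleGraph

theorem exists_fin_three_coloring_forall_ne {β : Type*} {f g : ℕ → β} {T : Set ℕ}
    (hf : InjOn f T) (hg : InjOn g T) (hne : ∀ n ∈ T, f n ≠ g n) :
    ∃ c : ℕ → Fin 3, ∀ n ∈ T, ∀ m ∈ T, c n = c m → f n ≠ g m := by
  let R : ℕ → ℕ → Prop := fun n m => n ∈ T ∧ m ∈ T ∧ f n = g m
  let G := SimpleGraph.fromRel R
  have hR : ∀ n, {m | R n m}.Subsingleton :=
    fun _ _ ha _ hb => hg ha.2.1 hb.2.1 (ha.2.2.symm.trans hb.2.2)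
  have hR' : ∀ n, {m | R m n}.Subsingleton :=
    fun _ _ ha _ hb => hf ha.1 hb.1 (ha.2.2.trans hb.2.2.symm)
  have hle : ∀ s : Set ℕ, s.Subsingleton → s.ncard ≤ 1 :=
    fun s hs => (ncard_le_one hs.finite).2 fun _ ha _ hb => hs ha hb
  obtain ⟨C⟩ : G.Colorable 3 := G.colorable_of_ncard_lt fun n => calc
    _ ≤ ({m | R n m} ∪ {m | R m n}).ncard :=
      ncard_le_ncard (fun _ hm => hm.2.2) ((hR n).finite.union (hR' n).finite)
    _ ≤ 1 + 1 := (ncard_union_le _ _).trans (add_le_add (hle _ (hR n)) (hle _ (hR' n)))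
    _ < 3 := by norm_num
  refine ⟨C, fun n hn m hm hc hfg => ?_⟩
  rcases eq_or_ne n m with rfl | hnm
  · exact hne n hn hfg
  · exact C.valid ((SimpleGraph.fromRel_adj _ _ _).2 ⟨hnm, Or.inl ⟨hn, hm, hfg⟩⟩) hc

theorem Ultrafilter.map_ne_map_of_coloring {α β ι : Type*} [Finite ι] {f g : α → β}
    {u : Ultrafilter α} {T : Set α} (hT : T ∈ u) (c : α → ι)
    (hc : ∀ n ∈ T, ∀ m ∈ T, c n = c m → f n ≠ g m) : u.map f ≠ u.map g := by
  intro hfg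
  obtain ⟨i, hi⟩ := (u.map c).eq_pure_of_finite
  have hP : T ∩ c ⁻¹' {i} ∈ u :=
    inter_mem hT (Ultrafilter.mem_map.1 (hi ▸ Ultrafilter.mem_pure.2 rfl))
  have hgP : g ⁻¹' (f '' (T ∩ c ⁻¹' {i})) ∈ u := by
    rw [← Ultrafilter.mem_map, ← hfg, Ultrafilter.mem_map]
    exact mem_of_superset hP (subset_preimage_image _ _)
  obtain ⟨m, ⟨hmT, hmi⟩, n, ⟨hnT, hni⟩, hnm⟩ :=
    Ultrafilter.nonempty_of_mem (inter_mem hP hgP)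
  exact hc n hnT m hmT (hni.trans hmi.symm) hnm

theorem finite_setOf_ne_of_map_eq {β : Type*} {f g : ℕ → β} {S : Set ℕ}
    (hf : InjOn f S) (hg : InjOn g S)
    (h : ∀ u : Ultrafilter ℕ, IsFreeUF u → u.map f = u.map g) :
    {n ∈ S | f n ≠ g n}.Finite := by
  by_contra hT
  have : (cofinite ⊓ 𝓟 {n ∈ S | f n ≠ g n}).NeBot :=
    (Set.not_finite.1 hT).cofinite_inf_principal_neBot
  obtain ⟨u, hu⟩ := Ultrafilter.exists_le (cofinite ⊓ 𝓟 {n ∈ S | f n ≠ g n})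
  obtain ⟨c, hc⟩ := exists_fin_three_coloring_forall_ne (hf.mono (sep_subset _ _))
    (hg.mono (sep_subset _ _)) fun _ hn => hn.2
  exact Ultrafilter.map_ne_map_of_coloring (le_principal_iff.1 (hu.trans inf_le_right)) c hc
    (h u (hu.trans inf_le_left))

theorem Set.BijOn.ncard_compl_image_add {α β : Type*} {f : α → β} {A E : Set α} {B : Set β}
    (hf : BijOn f A B) (hEA : E ⊆ A) (hE : Eᶜ.Finite) (hB : Bᶜ.Finite) :
    (f '' E)ᶜ.ncard + Aᶜ.ncard = Bᶜ.ncard + Eᶜ.ncard := by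
  have himg : f '' (A \ E) = B \ f '' E := by
    rw [hf.injOn.image_sdiff_subset hEA, hf.image_eq]
  have hfE : f '' E ⊆ B := (hf.mapsTo.mono_left hEA).image_subset
  have hfin : (f '' E)ᶜ.Finite := by
    refine Finite.of_sdiff ?_ hB
    rw [compl_sdiff_compl, ← himg]
    exact (hE.subset fun _ hx => hx.2).image f
  have hcardA := ncard_sdiff_add_ncard_of_subset (compl_subset_compl.2 hEA) hE
  have hcardB := ncard_sdiff_add_ncard_of_subset (compl_subset_compl.2 hfE) hfin
  rw [compl_sdiff_compl] at hcardA hcardB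
  rw [← himg, (hf.injOn.mono sdiff_subset).ncard_image] at hcardB
  omega

/-- For a bijection φ : A → B between cofinite subsets of ℕ define
h(φ) = |ℕ \ B| - |ℕ \ A| ∈ ℤ.  If φ : A → B and ψ : C → D induce the same map on
free ultrafilters, then h(φ) = h(ψ). -/
theorem h_well_defined
    (f g : ℕ → ℕ) (A B C D : Set ℕ)
    (hA : Aᶜ.Finite) (hB : Bᶜ.Finite) (hC : Cᶜ.Finite) (hD : Dᶜ.Finite)
    (hf : Set.BijOn f A B) (hg : Set.BijOn g C D)
    (heq : ∀ u : Ultrafilter ℕ, IsFreeUF u → Ultrafilter.map f u = Ultrafilter.map g u) :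
    (Bᶜ.ncard : ℤ) - (Aᶜ.ncard : ℤ) = (Dᶜ.ncard : ℤ) - (Cᶜ.ncard : ℤ) := by
  have hne := finite_setOf_ne_of_map_eq (hf.injOn.mono inter_subset_left)
    (hg.injOn.mono inter_subset_right) heq
  set E := {n ∈ A ∩ C | f n = g n}
  have hE : Eᶜ.Finite := ((hA.union hC).union hne).subset fun n hn => by
    by_cases hnA : n ∈ A <;> by_cases hnC : n ∈ C <;> simp_all [E]
  have hφ := hf.ncard_compl_image_add (fun _ hn => hn.1.1) hE hB
  have hψ := hg.ncard_compl_image_add (fun _ hn => hn.1.2) hE hD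
  rw [image_congr fun n hn => hn.2] at hφ
  omega
end

section
/- For bijections φ and ψ between cofinite subsets of ℕ, the composition ψ ∘ φ (defined on the cofinite set φ⁻¹(dom ψ ∩ ran φ)) is again a bijection between cofinite subsets of ℕ, and h(ψ ∘ φ) = h(ψ) + h(φ), where h(φ) = |ℕ \ ran φ| − |ℕ \ dom φ|. -/
/-!
Restricting a bijection `A → B` between cofinite sets to a cofinite `A' ⊆ A` removes the finite
set `A \ A'` from the domain and its image, of the same size, from the range, so `h` does not
change. The composite of `φ : A → B` and `ψ : C → D` is the restriction of `φ` to
`A ∩ φ⁻¹(C)`, a bijection onto `B ∩ C`, followed by the restriction of `ψ` to `B ∩ C`, and `h`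
telescopes along `A ∩ φ⁻¹(C) → B ∩ C → ψ(B ∩ C)`.
-/

open Set

variable {α β : Type*}

lemma Set.ncard_compl_eq_ncard_compl_add_ncard_diff {s t : Set α} (hst : s ⊆ t)
    (hs : sᶜ.Finite) : sᶜ.ncard = tᶜ.ncard + (t \ s).ncard := by
  rw [← compl_sdiff_compl, add_comm]
  exact (ncard_sdiff_add_ncard_of_subset (compl_subset_compl.mpr hst) hs).symm

lemma Set.InjOn.finite_compl_inter_preimage {f : α → β} {A : Set α} {C : Set β}
    (hf : InjOn f A) (hA : Aᶜ.Finite) (hC : Cᶜ.Finite) : (A ∩ f ⁻¹' C)ᶜ.Finite := by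
  have hlost : (A \ f ⁻¹' C).Finite :=
    (hC.subset (image_subset_iff.mpr fun _ hx => hx.2)).of_finite_image (hf.mono sdiff_subset)
  refine Finite.of_sdiff ?_ hA
  rwa [compl_sdiff_compl, sdiff_self_inter]

lemma Set.BijOn.ncard_compl_image_of_subset {f : α → β} {A A' : Set α} {B : Set β}
    (hf : BijOn f A B) (hA' : A' ⊆ A) (hlost : (A \ A').Finite) (hB : Bᶜ.Finite) :
    (f '' A')ᶜ.Finite ∧ (f '' A')ᶜ.ncard = Bᶜ.ncard + (A \ A').ncard := by
  have himage_diff : B \ f '' A' = f '' (A \ A') := by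
    rw [hf.injOn.image_sdiff_subset hA', hf.image_eq]
  have himage_sub : f '' A' ⊆ B := hf.image_eq ▸ image_mono hA'
  have hfin : (f '' A')ᶜ.Finite :=
    Finite.of_sdiff (by rw [compl_sdiff_compl, himage_diff]; exact hlost.image f) hB
  refine ⟨hfin, ?_⟩
  rw [ncard_compl_eq_ncard_compl_add_ncard_diff himage_sub hfin, himage_diff,
    (hf.injOn.mono sdiff_subset).ncard_image]

lemma Set.BijOn.ncard_compl_image_sub_ncard_compl {f : α → β} {A A' : Set α} {B : Set β}
    (hf : BijOn f A B) (hA' : A' ⊆ A) (hA'fin : A'ᶜ.Finite) (hB : Bᶜ.Finite) :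
    (f '' A')ᶜ.Finite ∧
      ((f '' A')ᶜ.ncard : ℤ) - A'ᶜ.ncard = (Bᶜ.ncard : ℤ) - Aᶜ.ncard := by
  have hlost : (A \ A').Finite := hA'fin.subset fun _ hx => hx.2
  obtain ⟨hfin, hcard⟩ := hf.ncard_compl_image_of_subset hA' hlost hB
  refine ⟨hfin, ?_⟩
  rw [hcard, ncard_compl_eq_ncard_compl_add_ncard_diff hA' hA'fin]
  push_cast
  ring

/-- For bijections φ : A → B and ψ : C → D between cofinite subsets of ℕ,
the composition ψ ∘ φ, defined on the cofinite set A ∩ φ⁻¹(C) (= φ⁻¹(dom ψ ∩ ran φ)),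
is again a bijection between cofinite subsets of ℕ, and h(ψ ∘ φ) = h(ψ) + h(φ),
where h(φ) = |ℕ \ ran φ| − |ℕ \ dom φ|. -/
theorem comp_cofinite_bij_and_h_additive
    (f g : ℕ → ℕ) (A B C D : Set ℕ)
    (hA : Aᶜ.Finite) (hB : Bᶜ.Finite) (hC : Cᶜ.Finite) (hD : Dᶜ.Finite)
    (hf : Set.BijOn f A B) (hg : Set.BijOn g C D) :
    ((A ∩ f ⁻¹' C)ᶜ).Finite ∧
    ((g '' (B ∩ C))ᶜ).Finite ∧
    Set.BijOn (g ∘ f) (A ∩ f ⁻¹' C) (g '' (B ∩ C)) ∧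
    ((g '' (B ∩ C))ᶜ.ncard : ℤ) - ((A ∩ f ⁻¹' C)ᶜ.ncard : ℤ) =
      ((Dᶜ.ncard : ℤ) - (Cᶜ.ncard : ℤ)) + ((Bᶜ.ncard : ℤ) - (Aᶜ.ncard : ℤ)) := by
  have hdom : (A ∩ f ⁻¹' C)ᶜ.Finite := hf.injOn.finite_compl_inter_preimage hA hC
  have hmid : f '' (A ∩ f ⁻¹' C) = B ∩ C := by rw [image_inter_preimage, hf.image_eq]
  obtain ⟨hmid_fin, hf_defect⟩ := hf.ncard_compl_image_sub_ncard_compl inter_subset_left hdom hB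
  rw [hmid] at hmid_fin hf_defect
  obtain ⟨hran, hg_defect⟩ :=
    hg.ncard_compl_image_sub_ncard_compl inter_subset_right hmid_fin hD
  have hbij : BijOn (g ∘ f) (A ∩ f ⁻¹' C) (g '' (B ∩ C)) := by
    rw [← hmid, ← image_comp]
    exact ((hg.injOn.mono inter_subset_right).comp (hf.injOn.mono inter_subset_left)
      (hmid ▸ mapsTo_image f _)).bijOn_image
  exact ⟨hdom, hran, hbij, by linarith⟩
end

section
/- If a trivial autohomeomorphism φ* of ℕ* is induced by a permutation of ℕ (i.e., φ can be chosen with dom φ = ran φ = ℕ), then h(φ*) = 0. Consequently, the shift n ↦ n+1 on ℕ and its inverse induce autohomeomorphisms of ℕ* that are not induced by any permutation of ℕ. -/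
/-!
If `f` induces the same map of `ℕ*` as a permutation `π`, then `f = π` off a finite set:
otherwise the injective map `π⁻¹ ∘ f` moves infinitely many points, hence some infinite `E`
is disjoint from its image, and a free ultrafilter containing `E` is moved by `π⁻¹ ∘ f`.
Shrinking the domain by a finite set `F` adds `|F|` to both `|ℕ \ dom|` and `|ℕ \ ran|`, so `h`
of `f` equals `h` of a restriction of `π`, which is `0` since `π` is a bijection of `ℕ`.
The shift has `h = 1` and its inverse `h = -1`.
-/

open Set Filter

variable {α β : Type*}

theorem Set.Infinite.exists_infinite_subset_disjoint_image {g : α → α} {D : Set α}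
    (hD : D.Infinite) (hg : InjOn g D) (hne : ∀ x ∈ D, g x ≠ x) :
    ∃ E ⊆ D, E.Infinite ∧ Disjoint E (g '' E) := by
  obtain ⟨e, heD, hsep⟩ := exists_seq_of_forall_finset_exists (· ∈ D)
    (fun x y => x ≠ y ∧ g x ≠ y ∧ g y ≠ x) fun s hs => by
      -- the points a new term must avoid; finite because `g` is injective on `D`
      have hbad : ((s : Set α) ∪ g '' s ∪ D ∩ g ⁻¹' s).Finite :=
        (s.finite_toSet.union (s.finite_toSet.image g)).union
          (Finite.of_finite_image (s.finite_toSet.subset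
            ((image_mono inter_subset_right).trans (image_preimage_subset g s)))
            (hg.mono inter_subset_left))
      obtain ⟨y, hyD, hy⟩ := (hD.sdiff hbad).nonempty
      simp only [mem_union, mem_image, mem_inter_iff, mem_preimage, Finset.mem_coe, not_or,
        not_exists, not_and] at hy
      exact ⟨y, hyD, fun x hx =>
        ⟨fun h => hy.1.1 (h ▸ hx), fun h => hy.1.2 x hx h, fun h => hy.2 hyD (h ▸ hx)⟩⟩
  have hne' : ∀ m n, g (e m) ≠ e n := fun m n => by
    rcases lt_trichotomy m n with h | rfl | h
    exacts [(hsep m n h).2.1, hne _ (heD m), (hsep n m h).2.2]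
  have hinj : Function.Injective e := fun m n hmn => by
    by_contra h
    rcases Ne.lt_or_gt h with h | h
    exacts [(hsep m n h).1 hmn, (hsep n m h).1 hmn.symm]
  refine ⟨range e, range_subset_iff.2 heD, infinite_range_of_injective hinj, ?_⟩
  rw [Set.disjoint_right]
  rintro _ ⟨_, ⟨m, rfl⟩, rfl⟩ ⟨n, hn⟩
  exact hne' m n hn.symm

theorem Set.InjOn.finite_setOf_ne_of_map_eq_self {g : α → α} {A : Set α} (hg : InjOn g A)
    (hfix : ∀ u : Ultrafilter α, (u : Filter α) ≤ cofinite → u.map g = u) :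
    {x ∈ A | g x ≠ x}.Finite := by
  by_contra hinf
  obtain ⟨E, -, hE, hdisj⟩ := Set.Infinite.exists_infinite_subset_disjoint_image hinf
    (hg.mono fun _ hx => hx.1) fun _ hx => hx.2
  have := hE.cofinite_inf_principal_neBot
  obtain ⟨u, hu⟩ := Ultrafilter.exists_le (cofinite ⊓ 𝓟 E)
  have hEu : E ∈ u := (hu.trans inf_le_right) (mem_principal_self E)
  have hgEu : g '' E ∈ u := hfix u (hu.trans inf_le_left) ▸ image_mem_map hEu
  obtain ⟨x, hxE, hxgE⟩ := u.nonempty_of_mem (inter_mem hEu hgEu)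
  exact disjoint_left.1 hdisj hxE hxgE

theorem Set.InjOn.finite_setOf_ne_of_map_eq_map_equiv {f : α → β} {A : Set α} (π : α ≃ β)
    (hf : InjOn f A)
    (hfπ : ∀ u : Ultrafilter α, (u : Filter α) ≤ cofinite → u.map f = u.map π) :
    {x ∈ A | f x ≠ π x}.Finite := by
  have hfix :
      ∀ u : Ultrafilter α, (u : Filter α) ≤ cofinite → u.map (π.symm ∘ f) = u := by
    intro u hu
    rw [← Ultrafilter.map_map, hfπ u hu, Ultrafilter.map_map, π.symm_comp_self,
      Ultrafilter.map_id]
  convert (π.symm.injective.comp_injOn hf).finite_setOf_ne_of_map_eq_self hfix using 3 with x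
  simp [π.symm_apply_eq]

theorem Set.ncard_compl_eq_add_ncard_sdiff {s t : Set α} (hts : t ⊆ s) (hs : sᶜ.Finite)
    (hst : (s \ t).Finite) : tᶜ.ncard = sᶜ.ncard + (s \ t).ncard := by
  have hsplit : tᶜ = sᶜ ∪ (s \ t) := by
    ext x
    have := @hts x
    simp only [mem_compl_iff, mem_union, mem_sdiff]
    tauto
  rw [hsplit, ncard_union_eq (disjoint_compl_left.mono_right sdiff_subset) hs hst]

theorem Set.BijOn.ncard_compl_add_ncard_compl_image {f : α → β} {A A' : Set α} {B : Set β}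
    (hf : BijOn f A B) (hA'A : A' ⊆ A) (hA : Aᶜ.Finite) (hB : Bᶜ.Finite)
    (hAA' : (A \ A').Finite) :
    Bᶜ.ncard + A'ᶜ.ncard = Aᶜ.ncard + (f '' A')ᶜ.ncard := by
  have himage : B \ f '' A' = f '' (A \ A') := by
    rw [← hf.image_eq, hf.injOn.image_sdiff_subset hA'A]
  have hB' : f '' A' ⊆ B := hf.image_eq ▸ image_mono hA'A
  rw [ncard_compl_eq_add_ncard_sdiff hA'A hA hAA',
    ncard_compl_eq_add_ncard_sdiff hB' hB (himage ▸ hAA'.image f), himage,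
    (hf.injOn.mono sdiff_subset).ncard_image]
  ring

theorem Set.BijOn.ncard_compl_eq_of_map_eq_perm {f : α → α} {A B : Set α} (hf : BijOn f A B)
    (π : Equiv.Perm α) (hA : Aᶜ.Finite) (hB : Bᶜ.Finite)
    (hfπ : ∀ u : Ultrafilter α, (u : Filter α) ≤ cofinite → u.map f = u.map π) :
    Bᶜ.ncard = Aᶜ.ncard := by
  set A' := {x ∈ A | f x = π x}
  have hAA' : (A \ A').Finite :=
    (hf.injOn.finite_setOf_ne_of_map_eq_map_equiv π hfπ).subset
      fun _ hx => ⟨hx.1, fun h => hx.2 ⟨hx.1, h⟩⟩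
  have hπA' : f '' A' = π '' A' := image_congr fun _ hx => hx.2
  have := hf.ncard_compl_add_ncard_compl_image (fun _ hx => hx.1) hA hB hAA'
  rw [hπA', ← π.image_compl, π.injective.injOn.ncard_image] at this
  omega

theorem Nat.bijOn_add_one_univ_compl_zero : BijOn (· + 1) univ ({0}ᶜ : Set ℕ) :=
  ⟨fun _ _ => Nat.succ_ne_zero _, fun _ _ _ _ => Nat.succ_injective.eq_iff.1,
    fun n hn => ⟨n - 1, mem_univ _, Nat.sub_add_cancel (Nat.pos_of_ne_zero hn)⟩⟩

theorem Nat.bijOn_sub_one_compl_zero_univ : BijOn (· - 1) ({0}ᶜ : Set ℕ) univ :=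
  ⟨fun _ _ => mem_univ _,
    fun m hm n hn h => by simp_all only [mem_compl_iff, mem_singleton_iff]; omega,
    fun n _ => ⟨n + 1, Nat.succ_ne_zero n, Nat.add_sub_cancel n 1⟩⟩

/-- If a trivial autohomeomorphism of ℕ* is induced by a permutation of ℕ,
then h of it is 0 (i.e. any cofinite-bijection representative f : A → B of a
permutation-induced map has |ℕ \ B| = |ℕ \ A|).  Consequently the shift n ↦ n+1 and
its (partial) inverse n ↦ n−1 induce autohomeomorphisms of ℕ* that are not induced by
any permutation of ℕ. -/
theorem perm_induced_h_zero_and_shift_not_perm :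
    (∀ (π : Equiv.Perm ℕ) (f : ℕ → ℕ) (A B : Set ℕ),
        Aᶜ.Finite → Bᶜ.Finite → Set.BijOn f A B →
        (∀ u : Ultrafilter ℕ, IsFreeUF u →
          Ultrafilter.map f u = Ultrafilter.map (⇑π) u) →
        (Bᶜ.ncard : ℤ) - (Aᶜ.ncard : ℤ) = 0) ∧
    (¬ ∃ π : Equiv.Perm ℕ, ∀ u : Ultrafilter ℕ, IsFreeUF u →
        Ultrafilter.map (fun n => n + 1) u = Ultrafilter.map (⇑π) u) ∧
    (¬ ∃ π : Equiv.Perm ℕ, ∀ u : Ultrafilter ℕ, IsFreeUF u →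
        Ultrafilter.map (fun n => n - 1) u = Ultrafilter.map (⇑π) u) := by
  refine ⟨fun π _ _ _ hA hB hf hfπ => ?_, ?_, ?_⟩
  · rw [hf.ncard_compl_eq_of_map_eq_perm π hA hB hfπ, sub_self]
  · rintro ⟨π, hπ⟩
    have :=
      Nat.bijOn_add_one_univ_compl_zero.ncard_compl_eq_of_map_eq_perm π (by simp) (by simp) hπ
    simp at this
  · rintro ⟨π, hπ⟩
    have :=
      Nat.bijOn_sub_one_compl_zero_univ.ncard_compl_eq_of_map_eq_perm π (by simp) (by simp) hπ
    simp at this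
end

section
/- If two permutations φ and ψ of ℕ all of whose orbits are finite induce autohomeomorphisms φ* and ψ* that are conjugate in Triv, and if κₙ, λₙ denote respectively the number of n-cycles of φ and ψ (n ≥ 1), then κₙ = λₙ for all but finitely many n, and for every n, κₙ is infinite if and only if λₙ is infinite. -/
open Cardinal

/-- The number of n-cycles (orbits of size n) of a permutation of ℕ. -/
noncomputable def nCycles (π : Equiv.Perm ℕ) (n : ℕ) : Cardinal :=
  #{S : Set ℕ // (∃ a : ℕ, S = {b | π.SameCycle a b}) ∧ S.ncard = n}

/-!
Conjugacy of `φ*` and `ψ*` by `τ*` says that the maps `φ ∘ t` and `t ∘ ψ` induce the same map on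
free ultrafilters. Two finite-to-one maps with this property agree off a finite set: otherwise
they disagree on an infinite set `S` with disjoint images under the two maps, and a free
ultrafilter containing `S` separates those images. So `t` conjugates `ψ` to `φ`, and its inverse
conjugates `φ` to `ψ`, off a finite set `E`. An orbit missing `E` is carried injectively onto an
orbit of the same size; hence the cycle counts can differ only at the finitely many sizes of
orbits meeting `E`, and there by at most `#E`.
-/

open Set Filter Function Equiv

section FiniteToOne

variable {α β : Type*} {f g : α → β}

lemma Filter.Tendsto.finite_preimage_of_cofinite (hf : Tendsto f cofinite cofinite) {s : Set β}
    (hs : s.Finite) : (f ⁻¹' s).Finite := by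
  simpa using hf hs.compl_mem_cofinite

lemma exists_seq_disjoint_range_of_infinite (hf : Tendsto f cofinite cofinite)
    (hg : Tendsto g cofinite cofinite) (hfg : {x | f x ≠ g x}.Infinite) :
    ∃ e : ℕ → α, e.Injective ∧ Disjoint (range (f ∘ e)) (range (g ∘ e)) := by
  classical
  obtain ⟨e, hne, hrel⟩ := exists_seq_of_forall_finset_exists (fun x ↦ f x ≠ g x)
    (fun x y ↦ x ≠ y ∧ f x ≠ g y ∧ g x ≠ f y) fun s _ ↦ by
      have hbad : (↑s ∪ f ⁻¹' (g '' ↑s) ∪ g ⁻¹' (f '' ↑s)).Finite :=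
        (s.finite_toSet.union (hf.finite_preimage_of_cofinite (s.finite_toSet.image g))).union
          (hg.finite_preimage_of_cofinite (s.finite_toSet.image f))
      obtain ⟨y, hy, hybad⟩ := (hfg.sdiff hbad).nonempty
      simp only [mem_union, mem_preimage, mem_image, not_or, not_exists, not_and] at hybad
      exact ⟨y, hy, fun x hx ↦ ⟨fun h ↦ hybad.1.1 (h ▸ hx), fun h ↦ hybad.2 x hx h,
        fun h ↦ hybad.1.2 x hx h⟩⟩
  refine ⟨e, fun m n hmn ↦ ?_, disjoint_left.2 ?_⟩
  · by_contra h
    rcases lt_or_gt_of_ne h with h | h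
    exacts [(hrel m n h).1 hmn, (hrel n m h).1 hmn.symm]
  · rintro _ ⟨m, rfl⟩ ⟨n, hnm⟩
    rcases lt_trichotomy m n with h | rfl | h
    exacts [(hrel m n h).2.1 hnm.symm, hne m hnm.symm, (hrel n m h).2.2 hnm]

lemma finite_setOf_ne_of_ultrafilter_map_eq (hf : Tendsto f cofinite cofinite)
    (hg : Tendsto g cofinite cofinite)
    (h : ∀ u : Ultrafilter α, (u : Filter α) ≤ cofinite → u.map f = u.map g) :
    {x | f x ≠ g x}.Finite := by
  by_contra hfg
  obtain ⟨e, he, hdisj⟩ := exists_seq_disjoint_range_of_infinite hf hg hfg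
  set u := (hyperfilter ℕ).map e
  have hu : (u : Filter α) ≤ cofinite := by
    rw [Ultrafilter.coe_map]
    exact he.tendsto_cofinite.mono_left hyperfilter_le_cofinite
  have hfe : range (f ∘ e) ∈ u.map f := range_mem_map
  have hge : range (g ∘ e) ∈ u.map f := h u hu ▸ range_mem_map
  exact (u.map f).empty_notMem (hdisj.inter_eq ▸ inter_mem hfe hge)

lemma Set.InjOn.tendsto_cofinite_of_finite_compl {t : α → β} {A : Set α} (ht : InjOn t A)
    (hA : Aᶜ.Finite) : Tendsto t cofinite cofinite :=
  Tendsto.cofinite_of_finite_preimage_singleton fun b ↦ by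
    have hfiber : (t ⁻¹' {b} ∩ A).Subsingleton := fun x hx y hy ↦
      ht hx.2 hy.2 (hx.1.trans hy.1.symm)
    refine (hA.union hfiber.finite).subset fun x hx ↦ ?_
    by_cases h : x ∈ A
    exacts [Or.inr ⟨hx, h⟩, Or.inl h]

lemma finite_setOf_ne_of_ultrafilter_map_conj {φ ψ : Perm α} {t : α → α} {A : Set α}
    (hA : Aᶜ.Finite) (ht : InjOn t A)
    (hconj : ∀ u : Ultrafilter α, (u : Filter α) ≤ cofinite →
      (u.map t).map φ = (u.map ψ).map t) :
    {x | φ (t x) ≠ t (ψ x)}.Finite := by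
  have htc := ht.tendsto_cofinite_of_finite_compl hA
  refine finite_setOf_ne_of_ultrafilter_map_eq (f := φ ∘ t) (g := t ∘ ψ)
    (φ.injective.tendsto_cofinite.comp htc) (htc.comp ψ.injective.tendsto_cofinite) fun u hu ↦ ?_
  rw [← Ultrafilter.map_map, ← Ultrafilter.map_map]
  exact hconj u hu

end FiniteToOne

namespace Equiv.Perm

variable {α β : Type*} {σ : Perm α} {τ : Perm β} {r : α → β} {a : α}

lemma setOf_sameCycle_eq_of_sameCycle {x : α} (h : σ.SameCycle a x) :
    {b | σ.SameCycle a b} = {b | σ.SameCycle x b} := by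
  ext b; exact ⟨h.symm.trans, h.trans⟩

lemma apply_zpow_apply_of_semiconj_on (hc : ∀ x, σ.SameCycle a x → τ (r x) = r (σ x))
    (i : ℤ) : r ((σ ^ i) a) = (τ ^ i) (r a) := by
  induction i using Int.induction_on with
  | zero => rfl
  | succ i ih =>
    rw [add_comm, zpow_add, zpow_add, zpow_one, zpow_one, mul_apply, mul_apply, ← ih,
      hc _ ⟨i, rfl⟩]
  | pred i ih =>
    have hmem : σ.SameCycle a (σ⁻¹ ((σ ^ (-(i : ℤ))) a)) :=
      ⟨-1 + -(i : ℤ), by rw [zpow_add, zpow_neg_one, mul_apply]⟩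
    rw [sub_eq_neg_add, zpow_add, zpow_add, zpow_neg_one, zpow_neg_one, mul_apply, mul_apply,
      ← ih, eq_inv_iff_eq, hc _ hmem, ← mul_apply, mul_inv_cancel, one_apply]

lemma image_setOf_sameCycle_of_semiconj_on (hc : ∀ x, σ.SameCycle a x → τ (r x) = r (σ x)) :
    r '' {b | σ.SameCycle a b} = {b | τ.SameCycle (r a) b} := by
  change r '' range (fun i : ℤ ↦ (σ ^ i) a) = range (fun i : ℤ ↦ (τ ^ i) (r a))
  rw [← range_comp]
  exact congrArg range (funext (apply_zpow_apply_of_semiconj_on hc))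

end Equiv.Perm

def nCycleSets (π : Perm ℕ) (n : ℕ) : Set (Set ℕ) :=
  {S | (∃ a : ℕ, S = {b | π.SameCycle a b}) ∧ S.ncard = n}

section Counting

variable {π₁ π₂ : Perm ℕ} {r : ℕ → ℕ} {E : Set ℕ}

lemma image_mem_nCycleSets_of_semiconj_off (hinj : InjOn r Eᶜ)
    (hc : ∀ x ∉ E, π₁ (r x) = r (π₂ x)) {n : ℕ} {S : Set ℕ} (hS : S ∈ nCycleSets π₂ n)
    (hSE : S ⊆ Eᶜ) : r '' S ∈ nCycleSets π₁ n := by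
  obtain ⟨⟨a, rfl⟩, hn⟩ := hS
  refine ⟨⟨r a, Perm.image_setOf_sameCycle_of_semiconj_on fun x hx ↦ hc x (hSE hx)⟩, ?_⟩
  rwa [(hinj.mono hSE).ncard_image]

lemma mk_nCycleSets_subset_compl_le (hinj : InjOn r Eᶜ) (hc : ∀ x ∉ E, π₁ (r x) = r (π₂ x))
    (n : ℕ) : #{S ∈ nCycleSets π₂ n | S ⊆ Eᶜ} ≤ nCycles π₁ n := by
  have himage_inj : InjOn (r '' ·) {S ∈ nCycleSets π₂ n | S ⊆ Eᶜ} :=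
    fun S hS S' hS' h ↦ (hinj.image_eq_image_iff hS.2 hS'.2).1 h
  rw [← mk_image_eq_of_injOn _ _ himage_inj]
  exact mk_le_mk_of_subset fun _ ⟨S, hS, hSS⟩ ↦
    hSS ▸ image_mem_nCycleSets_of_semiconj_off hinj hc hS.1 hS.2

lemma nCycleSets_not_subset_compl_subset (π : Perm ℕ) (n : ℕ) :
    {S ∈ nCycleSets π n | ¬S ⊆ Eᶜ} ⊆
      (fun b ↦ {x | π.SameCycle b x}) '' {b ∈ E | {x | π.SameCycle b x}.ncard = n} := by
  rintro _ ⟨⟨⟨a, rfl⟩, hn⟩, hE⟩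
  obtain ⟨b, hab, hbE⟩ := not_subset.1 hE
  rw [Perm.setOf_sameCycle_eq_of_sameCycle hab] at hn ⊢
  exact ⟨b, ⟨not_not.1 hbE, hn⟩, rfl⟩

lemma nCycles_le_add_of_semiconj_off (hinj : InjOn r Eᶜ) (hc : ∀ x ∉ E, π₁ (r x) = r (π₂ x))
    (n : ℕ) : nCycles π₂ n ≤ nCycles π₁ n + #{b ∈ E | {x | π₂.SameCycle b x}.ncard = n} :=
  calc nCycles π₂ n
      ≤ #({S ∈ nCycleSets π₂ n | S ⊆ Eᶜ} ∪ {S ∈ nCycleSets π₂ n | ¬S ⊆ Eᶜ} : Set (Set ℕ)) :=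
        mk_le_mk_of_subset fun S hS ↦ (em (S ⊆ Eᶜ)).imp (⟨hS, ·⟩) (⟨hS, ·⟩)
    _ ≤ #{S ∈ nCycleSets π₂ n | S ⊆ Eᶜ} + #{S ∈ nCycleSets π₂ n | ¬S ⊆ Eᶜ} := mk_union_le _ _
    _ ≤ nCycles π₁ n + #{b ∈ E | {x | π₂.SameCycle b x}.ncard = n} :=
        add_le_add (mk_nCycleSets_subset_compl_le hinj hc n)
          ((mk_le_mk_of_subset (nCycleSets_not_subset_compl_subset π₂ n)).trans mk_image_le)

theorem exists_finite_nCycles_le_of_semiconj_off (hE : E.Finite) (hinj : InjOn r Eᶜ)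
    (hc : ∀ x ∉ E, π₁ (r x) = r (π₂ x)) :
    ∃ N : Set ℕ, N.Finite ∧ (∀ n ∉ N, nCycles π₂ n ≤ nCycles π₁ n) ∧
      ∀ n, ℵ₀ ≤ nCycles π₂ n → ℵ₀ ≤ nCycles π₁ n := by
  refine ⟨(fun b ↦ {x | π₂.SameCycle b x}.ncard) '' E, hE.image _, fun n hn ↦ ?_, fun n hn ↦ ?_⟩
  · have hempty : {b ∈ E | {x | π₂.SameCycle b x}.ncard = n} = ∅ :=
      eq_empty_of_forall_notMem fun b hb ↦ hn ⟨b, hb⟩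
    simpa [hempty] using nCycles_le_add_of_semiconj_off hinj hc n
  · have hfin : #{b ∈ E | {x | π₂.SameCycle b x}.ncard = n} < ℵ₀ :=
      (hE.subset (sep_subset _ _)).lt_aleph0
    exact (aleph0_le_add_iff.1 (hn.trans (nCycles_le_add_of_semiconj_off hinj hc n))).resolve_right
      hfin.not_ge

end Counting

lemma Set.BijOn.semiconj_invFunOn_off {α β : Type*} [Nonempty α] {t : α → β} {A : Set α}
    {B : Set β} (ht : BijOn t A B) {σ : Perm α} {τ : Perm β} {E : Set α} (hEA : Eᶜ ⊆ A)
    (hc : ∀ x ∉ E, τ (t x) = t (σ x)) :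
    ∀ y ∉ t '' (E ∪ σ ⁻¹' E) ∪ Bᶜ, σ (invFunOn t A y) = invFunOn t A (τ y) := by
  intro y hy
  simp only [mem_union, mem_image, mem_preimage, mem_compl_iff, not_or, not_exists, not_and,
    not_not] at hy
  obtain ⟨hyE, hyB⟩ := hy
  have hsy : t (invFunOn t A y) = y := ht.invOn_invFunOn.2 hyB
  have hxE : invFunOn t A y ∉ E := fun h ↦ hyE _ (Or.inl h) hsy
  have hσxE : σ (invFunOn t A y) ∉ E := fun h ↦ hyE _ (Or.inr h) hsy
  calc σ (invFunOn t A y) = invFunOn t A (t (σ (invFunOn t A y))) :=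
        (ht.invOn_invFunOn.1 (hEA hσxE)).symm
    _ = invFunOn t A (τ y) := by rw [← hc _ hxE, hsy]

theorem conjugate_in_Triv_cycle_numbers_general
    (φ ψ : Equiv.Perm ℕ)
    (t : ℕ → ℕ) (A B : Set ℕ)
    (hA : Aᶜ.Finite) (hB : Bᶜ.Finite) (ht : Set.BijOn t A B)
    (hconj : ∀ u : Ultrafilter ℕ, IsFreeUF u →
      Ultrafilter.map (⇑φ) (Ultrafilter.map t u) =
      Ultrafilter.map t (Ultrafilter.map (⇑ψ) u)) :
    {n : ℕ | 1 ≤ n ∧ nCycles φ n ≠ nCycles ψ n}.Finite ∧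
    ∀ n : ℕ, 1 ≤ n → (ℵ₀ ≤ nCycles φ n ↔ ℵ₀ ≤ nCycles ψ n) := by
  set E := Aᶜ ∪ {x | φ (t x) ≠ t (ψ x)}
  have hE : E.Finite := hA.union (finite_setOf_ne_of_ultrafilter_map_conj hA ht.injOn hconj)
  have hEA : Eᶜ ⊆ A := fun x hx ↦ not_not.1 fun h ↦ hx (Or.inl h)
  have hc : ∀ x ∉ E, φ (t x) = t (ψ x) := fun x hx ↦ not_not.1 fun h ↦ hx (Or.inr h)
  set E' := t '' (E ∪ ψ ⁻¹' E) ∪ Bᶜ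
  have hE' : E'.Finite := ((hE.union (hE.preimage ψ.injective.injOn)).image t).union hB
  have hE'B : E'ᶜ ⊆ B := fun y hy ↦ not_not.1 fun h ↦ hy (Or.inr h)
  obtain ⟨N, hN, hle, hinf⟩ :=
    exists_finite_nCycles_le_of_semiconj_off hE (ht.injOn.mono hEA) hc
  obtain ⟨N', hN', hle', hinf'⟩ := exists_finite_nCycles_le_of_semiconj_off hE'
    (ht.invOn_invFunOn.2.injOn.mono hE'B) (ht.semiconj_invFunOn_off hEA hc)
  refine ⟨(hN.union hN').subset fun n ⟨_, hne⟩ ↦ ?_, fun n _ ↦ ⟨hinf' n, hinf n⟩⟩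
  by_contra hn
  exact hne ((hle' n fun h ↦ hn (Or.inr h)).antisymm (hle n fun h ↦ hn (Or.inl h)))

/-- If permutations φ, ψ of ℕ, all of whose orbits are finite, induce
autohomeomorphisms conjugate in Triv (via a bijection t : A → B between cofinite
sets with φ* ∘ τ* = τ* ∘ ψ*), and κₙ = nCycles φ n, λₙ = nCycles ψ n, then
κₙ = λₙ for all but finitely many n, and for every n, κₙ is infinite iff λₙ is. -/
theorem conjugate_in_Triv_cycle_numbers
    (φ ψ : Equiv.Perm ℕ)
    (hφfin : ∀ a : ℕ, {b | φ.SameCycle a b}.Finite)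
    (hψfin : ∀ a : ℕ, {b | ψ.SameCycle a b}.Finite)
    (t : ℕ → ℕ) (A B : Set ℕ)
    (hA : Aᶜ.Finite) (hB : Bᶜ.Finite) (ht : Set.BijOn t A B)
    (hconj : ∀ u : Ultrafilter ℕ, IsFreeUF u →
      Ultrafilter.map (⇑φ) (Ultrafilter.map t u) =
      Ultrafilter.map t (Ultrafilter.map (⇑ψ) u)) :
    {n : ℕ | 1 ≤ n ∧ nCycles φ n ≠ nCycles ψ n}.Finite ∧
    ∀ n : ℕ, 1 ≤ n → (ℵ₀ ≤ nCycles φ n ↔ ℵ₀ ≤ nCycles ψ n) :=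
  conjugate_in_Triv_cycle_numbers_general φ ψ t A B hA hB ht hconj
end

section
/- If x and y are infinite subsets of {2,3,4,...} whose symmetric difference is infinite, and π_x, π_y are permutations of ℕ having exactly one cycle of length n for each n in x (respectively y) and no other nontrivial cycles and no infinite orbits, then π_x* and π_y* are not conjugate in Triv. -/
open Cardinal

/-! A bijection between cofinite sets that conjugates `π_y*` to `π_x*` commutes with the
permutations off a finite set: two maps, injective on a cofinite set, that induce the same map on
free ultrafilters agree cofinitely, since otherwise they have disjoint images on some infinite set
`S`, and a free ultrafilter containing `S` tells them apart. Such a bijection carries every cycle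
avoiding a finite exceptional set onto a cycle of the same length, and only finitely many lengths
are lengths of cycles meeting that set. Applied to the bijection and to its inverse, this shows that
the cycle lengths of `π_x` and `π_y` agree up to finitely many, so `x ∆ y` is finite. -/

open Filter Set Function Equiv

variable {α β : Type*}

theorem exists_infinite_disjoint_image {f g : α → β} {D : Set α} (hD : D.Infinite)
    (hfg : ∀ a ∈ D, f a ≠ g a) (hf : InjOn f D) (hg : InjOn g D) :
    ∃ S ⊆ D, S.Infinite ∧ Disjoint (f '' S) (g '' S) := by
  let r : α → α → Prop := fun a b => a ≠ b ∧ f a ≠ g b ∧ f b ≠ g a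
  have : Std.Symm r := ⟨fun _ _ ⟨hne, h₁, h₂⟩ => ⟨hne.symm, h₂, h₁⟩⟩
  obtain ⟨e, heD, her⟩ := exists_seq_of_forall_finset_exists' (· ∈ D) r fun s _ => by
    have hbad : ((s : Set α) ∪ (D ∩ g ⁻¹' (f '' s)) ∪ (D ∩ f ⁻¹' (g '' s))).Finite :=
      (s.finite_toSet.union <| Finite.of_finite_image
        ((s.finite_toSet.image f).subset (image_subset_iff.2 fun _ h => h.2))
        (hg.mono inter_subset_left)).union <| Finite.of_finite_image
        ((s.finite_toSet.image g).subset (image_subset_iff.2 fun _ h => h.2))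
        (hf.mono inter_subset_left)
    obtain ⟨b, hbD, hb⟩ := (hD.sdiff hbad).nonempty
    refine ⟨b, hbD, fun a ha => ⟨?_, ?_, ?_⟩⟩
    · rintro rfl; exact hb (Or.inl (Or.inl ha))
    · exact fun h => hb (Or.inl (Or.inr ⟨hbD, a, ha, h⟩))
    · exact fun h => hb (Or.inr ⟨hbD, a, ha, h.symm⟩)
  refine ⟨range e, range_subset_iff.2 heD,
    infinite_range_of_injective (injective_iff_pairwise_ne.2 fun m n h => (her h).1), ?_⟩
  rw [disjoint_iff_forall_ne]
  rintro _ ⟨_, ⟨m, rfl⟩, rfl⟩ _ ⟨_, ⟨n, rfl⟩, rfl⟩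
  rcases lt_trichotomy m n with h | rfl | h
  · exact (her h.ne).2.1
  · exact hfg _ (heD m)
  · exact (her h.ne).2.2

theorem eventuallyEq_cofinite_of_forall_map_eq {f g : α → β} {W : Set α}
    (hW : W ∈ cofinite) (hf : InjOn f W) (hg : InjOn g W)
    (h : ∀ u : Ultrafilter α, (u : Filter α) ≤ cofinite → u.map f = u.map g) :
    f =ᶠ[cofinite] g := by
  by_contra hne
  have hD : (W ∩ {a | f a ≠ g a}).Infinite := by
    rw [inter_comm, ← sdiff_compl]
    exact Infinite.sdiff hne (mem_cofinite.1 hW)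
  obtain ⟨S, hSD, hS, hdisj⟩ := exists_infinite_disjoint_image hD (fun a ha => ha.2)
    (hf.mono inter_subset_left) (hg.mono inter_subset_left)
  have := hS.cofinite_inf_principal_neBot
  let u := Ultrafilter.of (cofinite ⊓ 𝓟 S)
  have hu : ↑u ≤ cofinite ⊓ 𝓟 S := Ultrafilter.of_le _
  have hSu : S ∈ u := hu (mem_inf_of_right (mem_principal_self S))
  have hgfS : g ⁻¹' (f '' S) ∈ u := by
    rw [← Ultrafilter.mem_map, ← h u (hu.trans inf_le_left)]
    exact Ultrafilter.mem_map.2 (mem_of_superset hSu (subset_preimage_image f S))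
  obtain ⟨b, hbS, a, haS, hab⟩ :=
    Ultrafilter.nonempty_of_mem (Filter.inter_mem (f := (u : Filter α)) hSu hgfS)
  exact disjoint_left.1 hdisj ⟨a, haS, hab⟩ ⟨b, hbS, rfl⟩

theorem tendsto_cofinite_of_leftInvOn {s : β → α} {t : α → β} {B : Set β}
    (hB : B ∈ cofinite) (h : LeftInvOn t s B) : Tendsto s cofinite cofinite := by
  intro F hF
  refine mem_cofinite.2 (((mem_cofinite.1 hB).union ((mem_cofinite.1 hF).image t)).subset ?_)
  intro b hb
  by_cases hbB : b ∈ B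
  · exact Or.inr ⟨s b, hb, h hbB⟩
  · exact Or.inl hbB

-- The form that conjugacy of `τ*` and `σ*` by `t*` in Triv takes on the points themselves.
def AlmostConj (t : α → β) (τ : Perm α) (σ : Perm β) : Prop :=
  ∃ A B : Set _, A ∈ cofinite ∧ B ∈ cofinite ∧ BijOn t A B ∧ t ∘ τ =ᶠ[cofinite] σ ∘ t

theorem AlmostConj.symm [Nonempty α] {t : α → β} {τ : Perm α} {σ : Perm β}
    (h : AlmostConj t τ σ) : ∃ s : β → α, AlmostConj s σ τ := by
  obtain ⟨A, B, hA, hB, hbij, hconj⟩ := h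
  have hinv := hbij.invOn_invFunOn
  have hsbij := hbij.symm hinv.symm
  refine ⟨invFunOn t A, B, A, hB, hA, hsbij, ?_⟩
  filter_upwards [hB, σ.injective.tendsto_cofinite hB, tendsto_cofinite_of_leftInvOn hB hinv.2
    (inter_mem hconj (τ.injective.tendsto_cofinite hA))] with b hb hσb ⟨hcomm, hτA⟩
  refine hbij.injOn (hsbij.mapsTo hσb) hτA ?_
  rw [hinv.2 hσb]
  exact (congrArg σ (hinv.2 hb)).symm.trans hcomm.symm

theorem image_sameCycle_of_semiconj {τ : Perm α} {σ : Perm β} {t : α → β} {a : α}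
    (h : ∀ b, τ.SameCycle a b → t (τ b) = σ (t b)) :
    t '' {b | τ.SameCycle a b} = {b | σ.SameCycle (t a) b} := by
  have hpow : ∀ k : ℤ, t ((τ ^ k) a) = (σ ^ k) (t a) := by
    intro k
    induction k using Int.induction_on with
    | zero => rfl
    | succ k ih =>
      rw [add_comm, zpow_add, zpow_add, zpow_one, zpow_one, Perm.mul_apply, Perm.mul_apply, ← ih]
      exact h _ ⟨k, rfl⟩
    | pred k ih =>
      rw [sub_eq_neg_add, zpow_add, zpow_add, zpow_neg_one, zpow_neg_one, Perm.mul_apply,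
        Perm.mul_apply, ← ih, Perm.eq_inv_iff_eq,
        ← h (τ⁻¹ ((τ ^ (-(k : ℤ))) a)) (Perm.sameCycle_symm_apply_right.2 ⟨_, rfl⟩)]
      exact congrArg t (τ.apply_symm_apply _)
  ext b
  constructor
  · rintro ⟨_, ⟨k, rfl⟩, rfl⟩
    exact ⟨k, (hpow k).symm⟩
  · rintro ⟨k, rfl⟩
    exact ⟨_, ⟨k, rfl⟩, hpow k⟩

theorem nCycles_ne_zero_iff {π : Perm ℕ} {n : ℕ} :
    nCycles π n ≠ 0 ↔ ∃ a, {b | π.SameCycle a b}.ncard = n := by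
  simp [nCycles, Cardinal.mk_ne_zero_iff]

theorem AlmostConj.finite_nCycles_ne_zero_and_eq_zero {t : ℕ → ℕ} {τ σ : Perm ℕ}
    (h : AlmostConj t τ σ) : {n | nCycles τ n ≠ 0 ∧ nCycles σ n = 0}.Finite := by
  obtain ⟨A, B, hA, -, hbij, hconj⟩ := h
  refine ((mem_cofinite.1 (inter_mem hA hconj)).image
    fun c => {b | τ.SameCycle c b}.ncard).subset ?_
  rintro n ⟨hτn, hσn⟩
  by_contra hn
  obtain ⟨a, rfl⟩ := nCycles_ne_zero_iff.1 hτn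
  have hgood : {b | τ.SameCycle a b} ⊆ A ∩ {b | t (τ b) = σ (t b)} := fun b hab => by
    by_contra hb
    exact hn ⟨b, hb, congrArg ncard (Set.ext fun _ => ⟨hab.trans, hab.symm.trans⟩)⟩
  have hsemi : ∀ b, τ.SameCycle a b → t (τ b) = σ (t b) := fun b hb => (hgood hb).2
  have hinj : InjOn t {b | τ.SameCycle a b} := hbij.injOn.mono fun b hb => (hgood hb).1
  refine nCycles_ne_zero_iff.2 ⟨t a, ?_⟩ hσn
  rw [← image_sameCycle_of_semiconj hsemi, hinj.ncard_image]

theorem nonconjugate_in_Triv_of_infinite_symmDiff_general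
    (x y : Set ℕ) (hx2 : x ⊆ {n : ℕ | 2 ≤ n}) (hy2 : y ⊆ {n : ℕ | 2 ≤ n})
    (hsd : (symmDiff x y).Infinite)
    (πx πy : Equiv.Perm ℕ)
    (hx1 : ∀ n ∈ x, nCycles πx n = 1)
    (hx0 : ∀ n : ℕ, 2 ≤ n → n ∉ x → nCycles πx n = 0)
    (hy1 : ∀ n ∈ y, nCycles πy n = 1)
    (hy0 : ∀ n : ℕ, 2 ≤ n → n ∉ y → nCycles πy n = 0) :
    ¬ ∃ (t : ℕ → ℕ) (A B : Set ℕ), Aᶜ.Finite ∧ Bᶜ.Finite ∧ Set.BijOn t A B ∧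
        ∀ u : Ultrafilter ℕ, IsFreeUF u →
          Ultrafilter.map (⇑πx) (Ultrafilter.map t u) =
          Ultrafilter.map t (Ultrafilter.map (⇑πy) u) := by
  rintro ⟨t, A, B, hA, hB, hbij, hcomm⟩
  have hW : A ∩ πy ⁻¹' A ∈ cofinite := inter_mem hA (πy.injective.tendsto_cofinite hA)
  have hconj : AlmostConj t πy πx := ⟨A, B, hA, hB, hbij,
    eventuallyEq_cofinite_of_forall_map_eq hW (hbij.injOn.comp πy.injective.injOn fun _ h => h.2)
      (πx.injective.comp_injOn (hbij.injOn.mono inter_subset_left))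
      fun u hu => by simpa only [Ultrafilter.map_map] using (hcomm u hu).symm⟩
  obtain ⟨s, hs⟩ := hconj.symm
  refine hsd ((hconj.finite_nCycles_ne_zero_and_eq_zero.union
    hs.finite_nCycles_ne_zero_and_eq_zero).subset ?_)
  rintro n (⟨hnx, hny⟩ | ⟨hny, hnx⟩)
  · exact Or.inr ⟨by simp [hx1 n hnx], hy0 n (hx2 hnx) hny⟩
  · exact Or.inl ⟨by simp [hy1 n hny], hx0 n (hy2 hny) hnx⟩

/-- If x, y ⊆ {n : 2 ≤ n} are infinite with infinite symmetric
difference, and π_x, π_y are permutations of ℕ with exactly one cycle of each length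
n ∈ x (resp. n ∈ y), no other nontrivial cycles and no infinite orbits, then π_x* and
π_y* are not conjugate in Triv: no bijection τ between cofinite subsets of ℕ satisfies
π_x* ∘ τ* = τ* ∘ π_y* on free ultrafilters. -/
theorem nonconjugate_in_Triv_of_infinite_symmDiff
    (x y : Set ℕ) (hx2 : x ⊆ {n : ℕ | 2 ≤ n}) (hy2 : y ⊆ {n : ℕ | 2 ≤ n})
    (hxinf : x.Infinite) (hyinf : y.Infinite)
    (hsd : (symmDiff x y).Infinite)
    (πx πy : Equiv.Perm ℕ)
    (hx1 : ∀ n ∈ x, nCycles πx n = 1)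
    (hx0 : ∀ n : ℕ, 2 ≤ n → n ∉ x → nCycles πx n = 0)
    (hxfin : ∀ a : ℕ, {b | πx.SameCycle a b}.Finite)
    (hy1 : ∀ n ∈ y, nCycles πy n = 1)
    (hy0 : ∀ n : ℕ, 2 ≤ n → n ∉ y → nCycles πy n = 0)
    (hyfin : ∀ a : ℕ, {b | πy.SameCycle a b}.Finite) :
    ¬ ∃ (t : ℕ → ℕ) (A B : Set ℕ), Aᶜ.Finite ∧ Bᶜ.Finite ∧ Set.BijOn t A B ∧
        ∀ u : Ultrafilter ℕ, IsFreeUF u →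
          Ultrafilter.map (⇑πx) (Ultrafilter.map t u) =
          Ultrafilter.map t (Ultrafilter.map (⇑πy) u) :=
  nonconjugate_in_Triv_of_infinite_symmDiff_general x y hx2 hy2 hsd πx πy hx1 hx0 hy1 hy0
end
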